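/- arXiv:0906.4173 — 2 statements merged into one kernel-verified Lean document; each statement's English description precedes it below -/
import Mathlib

section
/- Let R and S be binary relations on a set A such that R∘S ⊆ R ∪ (S∘R). If R is well-founded and S is well-founded, then R ∪ S is well-founded. -/
theorem doornbos_von_karger {A : Type*} (R S : A → A → Prop)
    (hcomp : ∀ x z : A, (∃ y, R x y ∧ S y z) → R x z ∨ (∃ y, S x y ∧ R y z))
    (hR : WellFounded (flip R)) (hS : WellFounded (flip S)) :
    WellFounded (flip (fun a b => R a b ∨ S a b)) := by
  set T : A → A → Prop := flip (fun a b => R a b ∨ S a b) with hT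
  have key : ∀ x, ¬ Acc T x → ∃ y, S x y ∧ ¬ Acc T y := by
    intro x
    induction x using hR.induction with
    | _ x ih =>
      intro hx
      have hex : ∃ y, T y x ∧ ¬ Acc T y := by
        by_contra h
        push_neg at h
        exact hx (Acc.intro x h)
      obtain ⟨y, hyx, hy⟩ := hex
      rcases (hyx : R x y ∨ S x y) with hr | hs
      · have inner : ∀ y, Acc (flip S) y → R x y → ¬ Acc T y →
            ∃ w, S x w ∧ ¬ Acc T w := by
          intro y hacc
          induction hacc with
          | intro y _ ihy =>
            intro hxy hny
            obtain ⟨z, hyz, hnz⟩ := ih y hxy hny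
            rcases hcomp x z ⟨y, hxy, hyz⟩ with hxz | ⟨d, hxd, hdz⟩
            · exact ihy z hyz hxz hnz
            · exact ⟨d, hxd, fun hd => hnz (hd.inv (Or.inl hdz))⟩
        exact inner y (hS.apply y) hr hy
      · exact ⟨y, hs, hy⟩
  refine ⟨fun x => ?_⟩
  induction x using hS.induction with
  | _ x ih2 =>
    by_contra hx
    obtain ⟨y, hxy, hy⟩ := key x hx
    exact hy (ih2 y hxy)
end

section
/- Labelling commutes with substitution in first-order semantic labelling: for a term t, substitution σ : X → Terms, and valuation μ : X → M, lab^μ(tσ) = lab^{σ*μ}(t)[x ↦ lab^μ(σ(x))], i.e., the labelled version of tσ under μ equals the result of applying the substitution x ↦ lab^μ(σ(x)) to the labelling of t under the valuation σ*μ defined by (σ*μ)(x) = ⟦σ(x)⟧μ. -/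
inductive Term (F : Type) (X : Type) (ar : F → ℕ) : Type
  | var : X → Term F X ar
  | fn (f : F) (args : Fin (ar f) → Term F X ar) : Term F X ar

namespace Term
variable {F X : Type} {ar : F → ℕ}

def subst (σ : X → Term F X ar) : Term F X ar → Term F X ar
  | var x => σ x
  | fn f ts => fn f (fun i => subst σ (ts i))

def eval {M : Type} (interp : ∀ f : F, (Fin (ar f) → M) → M) (μ : X → M) :
    Term F X ar → M
  | var x => μ x
  | fn f ts => interp f (fun i => eval interp μ (ts i))

def lab {M : Type} {S : F → Type} (interp : ∀ f : F, (Fin (ar f) → M) → M)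
    (π : ∀ f : F, (Fin (ar f) → M) → S f) (μ : X → M) :
    Term F X ar → Term (Σ f : F, S f) X (fun p => ar p.1)
  | var x => var x
  | fn f ts => fn ⟨f, π f (fun i => eval interp μ (ts i))⟩ (fun i => lab interp π μ (ts i))

end Term

namespace Term

variable {F X M : Type} {ar : F → ℕ}

theorem eval_subst (interp : ∀ f : F, (Fin (ar f) → M) → M) (σ : X → Term F X ar) (μ : X → M)
    (t : Term F X ar) :
    eval interp μ (subst σ t) = eval interp (fun x => eval interp μ (σ x)) t := by
  induction t with
  | var x => rfl
  | fn f ts ih => simp only [subst, eval, ih]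

end Term

/-- Labelling commutes with substitution:
`lab^μ(tσ) = (lab^{σ*μ} t)[x ↦ lab^μ(σ x)]` where `(σ*μ)(x) = ⟦σ x⟧μ`. -/
theorem lab_subst {F X M : Type} {ar : F → ℕ} (S : F → Type)
    (interp : ∀ f : F, (Fin (ar f) → M) → M)
    (π : ∀ f : F, (Fin (ar f) → M) → S f)
    (t : Term F X ar) (σ : X → Term F X ar) (μ : X → M) :
    Term.lab interp π μ (Term.subst σ t) =
      Term.subst (fun x => Term.lab interp π μ (σ x))
        (Term.lab interp π (fun x => Term.eval interp μ (σ x)) t) := by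
  induction t with
  | var x => rfl
  | fn f ts ih =>
    simp only [Term.subst, Term.lab, ih]
    -- `rw`, not `simp`: the label is part of the function symbol, on which the arity depends
    rw [funext fun i => Term.eval_subst interp σ μ (ts i)]
end
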